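/- arXiv:2004.14049 — 7 statements merged into one kernel-verified Lean document; each statement's English description precedes it below -/
import Mathlib

section
/- A bridgeless cubic graph G satisfies l(G) = 1 if and only if the perfect matching index of G equals 4, where l(G) is the minimum number of perfect matchings that need to be added to G (as parallel edges) so that the resulting multigraph is Class I. -/
open Finset
open scoped Classical

/-- A perfect matching of `G`, given as a finite set of edges: every vertex lies on
exactly one edge of `M`. -/
def IsPM {V : Type*} (G : SimpleGraph V) (M : Finset (Sym2 V)) : Prop :=
  (∀ e ∈ M, e ∈ G.edgeSet) ∧ ∀ v : V, (M.filter (fun e => v ∈ e)).card = 1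

/-- The multigraph obtained from the cubic graph `G` by adding `m e` parallel copies of
each edge `e` is Class I with `c` colours; equivalently (since that multigraph is regular)
its edge multiset decomposes into `c` perfect matchings of `G`. -/
def ClassIPlus {V : Type*} (G : SimpleGraph V) (m : Sym2 V → ℕ) (c : ℕ) : Prop :=
  ∃ F : Fin c → Finset (Sym2 V), (∀ i, IsPM G (F i)) ∧
    ∀ e ∈ G.edgeSet, (Finset.univ.filter (fun i => e ∈ F i)).card = 1 + m e

/-- The set of `k` for which some `k` perfect matchings added to `G` give a Class I
multigraph. -/
def lSet {V : Type*} (G : SimpleGraph V) : Set ℕ :=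
  {k | ∃ M : Fin k → Finset (Sym2 V), (∀ i, IsPM G (M i)) ∧
    ClassIPlus G (fun e => (Finset.univ.filter (fun i => e ∈ M i)).card) (k + 3)}

/-- `l(G)`: the minimum number of perfect matchings to add to `G` to get a Class I
multigraph (`⊤` if impossible). -/
noncomputable def lVal {V : Type*} (G : SimpleGraph V) : ℕ∞ :=
  sInf ((fun k : ℕ => (k : ℕ∞)) '' lSet G)

/-- The perfect matching index (excessive index) of `G`. -/
noncomputable def pmIndex {V : Type*} (G : SimpleGraph V) : ℕ∞ :=
  sInf ((fun k : ℕ => (k : ℕ∞)) '' {k | ∃ F : Fin k → Finset (Sym2 V),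
    (∀ i, IsPM G (F i)) ∧ ∀ e ∈ G.edgeSet, ∃ i, e ∈ F i})

/-- `G` is cubic (3-regular). -/
def IsCubic {V : Type*} [Fintype V] (G : SimpleGraph V) : Prop := ∀ v, G.degree v = 3

/-- `G` is bridgeless. -/
def IsBridgeless {V : Type*} (G : SimpleGraph V) : Prop := ∀ e ∈ G.edgeSet, ¬ G.IsBridge e

/-! ### Auxiliary lemmas -/

lemma sInf_image_nat_eq (S : Set ℕ) (n : ℕ) :
    sInf ((fun k : ℕ => (k : ℕ∞)) '' S) = (n : ℕ∞) ↔ n ∈ S ∧ ∀ k ∈ S, n ≤ k := by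
  constructor
  · intro h
    have hne : S.Nonempty := by
      by_contra hS
      rw [Set.not_nonempty_iff_eq_empty] at hS
      rw [hS, Set.image_empty, sInf_empty] at h
      exact (ENat.coe_ne_top n) h.symm
    have hm : sInf ((fun k : ℕ => (k : ℕ∞)) '' S) = ((sInf S : ℕ) : ℕ∞) := by
      apply le_antisymm
      · exact sInf_le (Set.mem_image_of_mem _ (Nat.sInf_mem hne))
      · apply le_sInf
        rintro x ⟨k, hk, rfl⟩
        simpa using (Nat.cast_le.mpr (Nat.sInf_le hk) : ((sInf S : ℕ) : ℕ∞) ≤ (k : ℕ∞))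
    rw [hm] at h
    have h' : sInf S = n := by exact_mod_cast h
    exact ⟨h' ▸ Nat.sInf_mem hne, fun k hk => h' ▸ Nat.sInf_le hk⟩
  · rintro ⟨hmem, hlb⟩
    apply le_antisymm
    · exact sInf_le ⟨n, hmem, rfl⟩
    · apply le_sInf
      rintro x ⟨k, hk, rfl⟩
      simpa using (Nat.cast_le.mpr (hlb k hk) : ((n : ℕ) : ℕ∞) ≤ (k : ℕ∞))

lemma count_swap {ι α : Type*} [Fintype ι] (s : Finset α) (F : ι → Finset α) :
    ∑ e ∈ s, (Finset.univ.filter fun i => e ∈ F i).card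
      = ∑ i, (s.filter fun e => e ∈ F i).card := by
  simp_rw [Finset.card_filter]
  exact Finset.sum_comm

lemma filter_inc {V : Type*} [Fintype V] (G : SimpleGraph V) (M : Finset (Sym2 V))
    (hM : IsPM G M) (v : V) :
    ((G.edgeFinset.filter fun e => v ∈ e).filter fun e => e ∈ M)
      = M.filter fun e => v ∈ e := by
  ext e
  simp only [Finset.mem_filter, SimpleGraph.mem_edgeFinset]
  constructor
  · rintro ⟨⟨_, hv⟩, hMe⟩; exact ⟨hMe, hv⟩
  · rintro ⟨hMe, hv⟩; exact ⟨⟨hM.1 e hMe, hv⟩, hMe⟩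

lemma cover_sum {V : Type*} [Fintype V] (G : SimpleGraph V) {ι : Type*} [Fintype ι]
    (F : ι → Finset (Sym2 V)) (hF : ∀ i, IsPM G (F i)) (v : V) :
    ∑ e ∈ G.edgeFinset.filter (fun e => v ∈ e), (Finset.univ.filter fun i => e ∈ F i).card
      = Fintype.card ι := by
  have hswap : ∑ e ∈ G.edgeFinset.filter (fun e => v ∈ e),
      (Finset.univ.filter fun i => e ∈ F i).card
      = ∑ i, ((G.edgeFinset.filter (fun e => v ∈ e)).filter fun e => e ∈ F i).card := by
    simp_rw [Finset.card_filter]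
    exact Finset.sum_comm
  rw [hswap, Finset.sum_congr rfl (fun i _ => by rw [filter_inc G (F i) (hF i) v, (hF i).2 v])]
  simp

lemma inc_card {V : Type*} [Fintype V] (G : SimpleGraph V) (hcub : IsCubic G) (v : V) :
    (G.edgeFinset.filter fun e => v ∈ e).card = 3 := by
  classical
  rw [← SimpleGraph.incidenceFinset_eq_filter, SimpleGraph.card_incidenceFinset_eq_degree,
    hcub v]

lemma sum_card_all_one {α : Type*} (s : Finset α) (f : α → ℕ)
    (h1 : ∀ a ∈ s, 1 ≤ f a) (hs : ∑ a ∈ s, f a = s.card) :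
    ∀ a ∈ s, f a = 1 := by
  intro a ha
  by_contra h
  have h2 : 2 ≤ f a := by have := h1 a ha; omega
  have he := Finset.add_sum_erase s f ha
  have hb : (s.erase a).card • 1 ≤ ∑ b ∈ s.erase a, f b :=
    Finset.card_nsmul_le_sum _ _ _ (fun x hx => h1 x (Finset.mem_of_mem_erase hx))
  have hce : (s.erase a).card = s.card - 1 := Finset.card_erase_of_mem ha
  have hcard : 1 ≤ s.card := Finset.card_pos.mpr ⟨a, ha⟩
  simp only [smul_eq_mul, mul_one] at hb
  omega

lemma sum_card_succ {α : Type*} (s : Finset α) (f : α → ℕ)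
    (h1 : ∀ a ∈ s, 1 ≤ f a) (hs : ∑ a ∈ s, f a = s.card + 1) :
    (s.filter fun a => 2 ≤ f a).card = 1 ∧ ∀ a ∈ s, f a ≤ 2 := by
  have hub : ∀ a ∈ s, f a ≤ 2 := by
    intro a ha
    have he := Finset.add_sum_erase s f ha
    have hb : (s.erase a).card • 1 ≤ ∑ b ∈ s.erase a, f b :=
      Finset.card_nsmul_le_sum _ _ _ (fun x hx => h1 x (Finset.mem_of_mem_erase hx))
    have hce : (s.erase a).card = s.card - 1 := Finset.card_erase_of_mem ha
    have hcard : 1 ≤ s.card := Finset.card_pos.mpr ⟨a, ha⟩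
    simp only [smul_eq_mul, mul_one] at hb
    omega
  refine ⟨le_antisymm ?_ ?_, hub⟩
  · have hsub : ∑ a ∈ s, (f a - 1) = 1 := by
      have heq : ∑ a ∈ s, f a = ∑ a ∈ s, ((f a - 1) + 1) :=
        Finset.sum_congr rfl (fun a ha => by have := h1 a ha; omega)
      rw [Finset.sum_add_distrib, Finset.sum_const, smul_eq_mul, mul_one] at heq
      omega
    have h1' : (s.filter fun a => 2 ≤ f a).card • 1 ≤ ∑ a ∈ s.filter (fun a => 2 ≤ f a), (f a - 1) :=
      Finset.card_nsmul_le_sum _ _ _ (fun x hx => by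
        have := (Finset.mem_filter.mp hx).2; omega)
    have h2' : ∑ a ∈ s.filter (fun a => 2 ≤ f a), (f a - 1) ≤ ∑ a ∈ s, (f a - 1) :=
      Finset.sum_le_sum_of_subset (Finset.filter_subset _ _)
    simp only [smul_eq_mul, mul_one] at h1'
    omega
  · rw [Nat.one_le_iff_ne_zero, Ne, Finset.card_eq_zero]
    intro hempty
    have hall : ∀ a ∈ s, f a = 1 := by
      intro a ha
      have hno : ¬ 2 ≤ f a := fun h => Finset.notMem_empty a
        (hempty ▸ Finset.mem_filter.mpr ⟨ha, h⟩)
      have := h1 a ha; omega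
    have : ∑ a ∈ s, f a = s.card := by
      rw [Finset.sum_congr rfl hall, Finset.sum_const, smul_eq_mul, mul_one]
    omega

lemma cover_pos {V : Type*} {ι : Type*} [Fintype ι]
    (F : ι → Finset (Sym2 V)) {e : Sym2 V} (h : ∃ i, e ∈ F i) :
    1 ≤ (Finset.univ.filter fun i => e ∈ F i).card := by
  obtain ⟨i, hi⟩ := h
  exact Finset.card_pos.mpr ⟨i, Finset.mem_filter.mpr ⟨Finset.mem_univ i, hi⟩⟩

lemma three_le {V : Type*} [Fintype V] {G : SimpleGraph V} (hcub : IsCubic G) (v : V)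
    {k : ℕ} (F : Fin k → Finset (Sym2 V)) (hF : ∀ i, IsPM G (F i))
    (hcov : ∀ e ∈ G.edgeSet, ∃ i, e ∈ F i) : 3 ≤ k := by
  have hsum := cover_sum G F hF v
  rw [Fintype.card_fin] at hsum
  have hcard := inc_card G hcub v
  have hb : (G.edgeFinset.filter fun e => v ∈ e).card • 1
      ≤ ∑ e ∈ G.edgeFinset.filter (fun e => v ∈ e), (Finset.univ.filter fun i => e ∈ F i).card :=
    Finset.card_nsmul_le_sum _ _ _ (fun e he => cover_pos F
      (hcov e ((SimpleGraph.mem_edgeFinset).mp (Finset.mem_filter.mp he).1)))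
  simp only [smul_eq_mul, mul_one] at hb
  omega

lemma three_cover {V : Type*} [Fintype V] {G : SimpleGraph V} (hcub : IsCubic G)
    (F : Fin 3 → Finset (Sym2 V)) (hF : ∀ i, IsPM G (F i))
    (hcov : ∀ e ∈ G.edgeSet, ∃ i, e ∈ F i) :
    ∀ e ∈ G.edgeSet, (Finset.univ.filter fun i => e ∈ F i).card = 1 := by
  intro e he
  have ha : e.out.1 ∈ e := Sym2.out_fst_mem e
  have hsum := cover_sum G F hF e.out.1
  rw [Fintype.card_fin] at hsum
  have hcard := inc_card G hcub e.out.1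
  refine sum_card_all_one (G.edgeFinset.filter fun e' => e.out.1 ∈ e')
    (fun e' => (Finset.univ.filter fun i => e' ∈ F i).card)
    (fun e' he' => cover_pos F (hcov e' ((SimpleGraph.mem_edgeFinset).mp
      (Finset.mem_filter.mp he').1))) (by rw [hsum, hcard]) e
    (Finset.mem_filter.mpr ⟨SimpleGraph.mem_edgeFinset.mpr he, ha⟩)

lemma four_pm {V : Type*} [Fintype V] {G : SimpleGraph V} (hcub : IsCubic G)
    (F : Fin 4 → Finset (Sym2 V)) (hF : ∀ i, IsPM G (F i))
    (hcov : ∀ e ∈ G.edgeSet, ∃ i, e ∈ F i) :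
    ∃ M : Finset (Sym2 V), IsPM G M ∧ ∀ e ∈ G.edgeSet,
      (Finset.univ.filter fun i => e ∈ F i).card = 1 + (if e ∈ M then 1 else 0) := by
  set t : Sym2 V → ℕ := fun e => (Finset.univ.filter fun i => e ∈ F i).card with ht
  have key : ∀ v : V,
      ((G.edgeFinset.filter fun e => v ∈ e).filter fun e => 2 ≤ t e).card = 1 ∧
      ∀ e ∈ G.edgeFinset.filter fun e => v ∈ e, t e ≤ 2 := by
    intro v
    have hsum := cover_sum G F hF v
    rw [Fintype.card_fin] at hsum
    have hcard := inc_card G hcub v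
    exact sum_card_succ _ t
      (fun e' he' => cover_pos F (hcov e' ((SimpleGraph.mem_edgeFinset).mp
        (Finset.mem_filter.mp he').1))) (by rw [hsum, hcard])
  refine ⟨G.edgeFinset.filter fun e => 2 ≤ t e, ⟨?_, ?_⟩, ?_⟩
  · intro e he
    exact SimpleGraph.mem_edgeFinset.mp (Finset.mem_filter.mp he).1
  · intro v
    rw [Finset.filter_comm]
    exact (key v).1
  · intro e he
    have htt : (Finset.univ.filter fun i => e ∈ F i).card = t e := rfl
    rw [htt]
    have ha : e.out.1 ∈ e := Sym2.out_fst_mem e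
    have hmem : e ∈ G.edgeFinset.filter fun e' => e.out.1 ∈ e' :=
      Finset.mem_filter.mpr ⟨SimpleGraph.mem_edgeFinset.mpr he, ha⟩
    have hub := (key e.out.1).2 e hmem
    have hlb : 1 ≤ t e := cover_pos F (hcov e he)
    split_ifs with hM
    · have h2 := (Finset.mem_filter.mp hM).2
      omega
    · have h2 : ¬ 2 ≤ t e := fun h =>
        hM (Finset.mem_filter.mpr ⟨SimpleGraph.mem_edgeFinset.mpr he, h⟩)
      omega

/-- A bridgeless cubic graph `G` satisfies `l(G) = 1` iff its perfect matching index is `4`. -/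
theorem stmt0 {V : Type*} [Fintype V] (G : SimpleGraph V)
    (hcub : IsCubic G) (hbl : IsBridgeless G) :
    lVal G = 1 ↔ pmIndex G = 4 := by
  classical
  rw [show (1 : ℕ∞) = ((1 : ℕ) : ℕ∞) from rfl, show (4 : ℕ∞) = ((4 : ℕ) : ℕ∞) from rfl,
    lVal, pmIndex, sInf_image_nat_eq, sInf_image_nat_eq]
  constructor
  · rintro ⟨h1, hlb⟩
    obtain ⟨M, hM, F, hFpm, hFcov⟩ := h1
    constructor
    · refine ⟨F, hFpm, fun e he => ?_⟩
      have := hFcov e he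
      have hpos : 0 < (Finset.univ.filter fun i => e ∈ F i).card := by omega
      obtain ⟨i, hi⟩ := Finset.card_pos.mp hpos
      exact ⟨i, (Finset.mem_filter.mp hi).2⟩
    · intro k hk
      have hV : Nonempty V := by
        by_contra hV
        have h0 : (0 : ℕ) ∈ lSet G := by
          refine ⟨Fin.elim0, fun i => i.elim0, fun _ => ∅, fun i => ⟨by simp, ?_⟩, ?_⟩
          · intro v; exact absurd (Nonempty.intro v) hV
          · intro e he
            induction e with
            | h a b => exact absurd (Nonempty.intro a) hV
        exact absurd (hlb 0 h0) (by omega)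
      obtain ⟨v⟩ := hV
      obtain ⟨F', hF'pm, hF'cov⟩ := hk
      have h3 : 3 ≤ k := three_le hcub v F' hF'pm hF'cov
      rcases Nat.lt_or_ge k 4 with h4 | h4
      · exfalso
        have hk3 : k = 3 := by omega
        subst hk3
        have hexact := three_cover hcub F' hF'pm hF'cov
        have h0 : (0 : ℕ) ∈ lSet G := by
          refine ⟨Fin.elim0, fun i => i.elim0, F', hF'pm, fun e he => ?_⟩
          rw [hexact e he]
          simp
        exact absurd (hlb 0 h0) (by omega)
      · exact h4
  · rintro ⟨h4, hlb⟩
    obtain ⟨F, hFpm, hFcov⟩ := h4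
    constructor
    · obtain ⟨M, hMpm, ht⟩ := four_pm hcub F hFpm hFcov
      refine ⟨fun _ => M, fun _ => hMpm, F, hFpm, fun e he => ?_⟩
      rw [ht e he]
      congr 1
      by_cases h : e ∈ M <;> simp [h]
    · intro k hk
      by_contra h
      have hk0 : k = 0 := by omega
      subst hk0
      obtain ⟨Mk, hMk, Fk, hFkpm, hFkcov⟩ := hk
      have h3 : (3 : ℕ) ∈ {k | ∃ F : Fin k → Finset (Sym2 V),
          (∀ i, IsPM G (F i)) ∧ ∀ e ∈ G.edgeSet, ∃ i, e ∈ F i} := by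
        refine ⟨Fk, hFkpm, fun e he => ?_⟩
        have := hFkcov e he
        have hpos : 0 < (Finset.univ.filter fun i => e ∈ Fk i).card := by omega
        obtain ⟨i, hi⟩ := Finset.card_pos.mp hpos
        exact ⟨i, (Finset.mem_filter.mp hi).2⟩
      exact absurd (hlb 3 h3) (by omega)
end

section
/- For a bridgeless cubic graph G, l(G) is finite if and only if the all-ones vector belongs to the perfect matching lattice of G, i.e. if and only if there exist perfect matchings J_1,...,J_s and N_1,...,N_t of G such that the sum of the characteristic vectors of the J_i minus the sum of the characteristic vectors of the N_j equals the all-ones vector in Z^{E(G)}. -/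
open Finset
open scoped Classical

/-- The all-ones vector on `E(G)` lies in the perfect matching lattice of `G`:
there are perfect matchings `J 0, …, J (s-1)` and `N 0, …, N (t-1)` such that on every
edge the sum of the characteristic vectors of the `J i` minus the sum of the
characteristic vectors of the `N j` equals `1`. -/
def OnesInLat {V : Type*} (G : SimpleGraph V) : Prop :=
  ∃ (s t : ℕ) (J : Fin s → Finset (Sym2 V)) (N : Fin t → Finset (Sym2 V)),
    (∀ i, IsPM G (J i)) ∧ (∀ j, IsPM G (N j)) ∧
    ∀ e ∈ G.edgeSet,
      ((Finset.univ.filter (fun i => e ∈ J i)).card : ℤ)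
        - ((Finset.univ.filter (fun j => e ∈ N j)).card : ℤ) = 1


/-- Double counting: summing the multiplicities of the edges at a vertex over the
incidence set gives the number of perfect matchings in the family. -/
lemma mem_incidenceSet_iff' {V : Type*} (G : SimpleGraph V) (v : V) (e : Sym2 V) :
    e ∈ G.incidenceSet v ↔ e ∈ G.edgeSet ∧ v ∈ e := Iff.rfl

lemma sum_count_incidence {V : Type*} [Fintype V] (G : SimpleGraph V) {n : ℕ}
    (F : Fin n → Finset (Sym2 V)) (hF : ∀ i, IsPM G (F i)) (v : V) :
    ∑ e ∈ G.incidenceFinset v, (Finset.univ.filter (fun i => e ∈ F i)).card = n := by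
  have key : ∀ i : Fin n,
      ((G.incidenceFinset v).filter (fun e => e ∈ F i)).card = 1 := by
    intro i
    have : (G.incidenceFinset v).filter (fun e => e ∈ F i)
        = (F i).filter (fun e => v ∈ e) := by
      ext e
      simp only [Finset.mem_filter, SimpleGraph.mem_incidenceFinset,
        mem_incidenceSet_iff']
      constructor
      · rintro ⟨⟨he, hv⟩, hi⟩; exact ⟨hi, hv⟩
      · rintro ⟨hi, hv⟩; exact ⟨⟨(hF i).1 e hi, hv⟩, hi⟩
    rw [this]; exact (hF i).2 v
  calc ∑ e ∈ G.incidenceFinset v, (Finset.univ.filter (fun i => e ∈ F i)).card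
      = ∑ e ∈ G.incidenceFinset v, ∑ i : Fin n, (if e ∈ F i then 1 else 0) :=
        Finset.sum_congr rfl fun e _ => Finset.card_filter _ _
    _ = ∑ i : Fin n, ∑ e ∈ G.incidenceFinset v, (if e ∈ F i then 1 else 0) :=
        Finset.sum_comm
    _ = ∑ i : Fin n, ((G.incidenceFinset v).filter (fun e => e ∈ F i)).card :=
        Finset.sum_congr rfl fun i _ => (Finset.card_filter _ _).symm
    _ = n := by simp [key]

/-- For a bridgeless cubic graph, `l(G)` is finite iff the all-ones vector lies in the
perfect matching lattice of `G`. -/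
theorem stmt1 {V : Type*} [Fintype V] (G : SimpleGraph V)
    (hcub : IsCubic G) (hbl : IsBridgeless G) :
    lVal G ≠ ⊤ ↔ OnesInLat G := by
  constructor
  · intro h
    have hne : (lSet G).Nonempty := by
      by_contra hemp
      rw [Set.not_nonempty_iff_eq_empty] at hemp
      simp [lVal, hemp] at h
    obtain ⟨k, M, hM, F, hF, hcount⟩ := hne
    refine ⟨k + 3, k, F, M, hF, hM, fun e he => ?_⟩
    have := hcount e he
    push_cast [this]
    ring
  · rintro ⟨s, t, J, N, hJ, hN, heq⟩
    by_cases hV : Nonempty V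
    · obtain ⟨v⟩ := hV
      have hst : s = t + 3 := by
        have h1 := sum_count_incidence G J hJ v
        have h2 := sum_count_incidence G N hN v
        have hdeg : (G.incidenceFinset v).card = 3 := by
          rw [G.card_incidenceFinset_eq_degree v]; exact hcub v
        have h3 : ∀ e ∈ G.incidenceFinset v,
            (Finset.univ.filter (fun i => e ∈ J i)).card
              = 1 + (Finset.univ.filter (fun j => e ∈ N j)).card := by
          intro e he
          have he' : e ∈ G.edgeSet := by
            rw [SimpleGraph.mem_incidenceFinset, mem_incidenceSet_iff'] at he
            exact he.1
          have := heq e he'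
          omega
        have h4 : ∑ e ∈ G.incidenceFinset v, (Finset.univ.filter (fun i => e ∈ J i)).card
            = ∑ e ∈ G.incidenceFinset v,
              (1 + (Finset.univ.filter (fun j => e ∈ N j)).card) :=
          Finset.sum_congr rfl h3
        rw [Finset.sum_add_distrib, Finset.sum_const, hdeg, h2, smul_eq_mul] at h4
        omega
      subst hst
      have htmem : t ∈ lSet G := by
        refine ⟨N, hN, J, hJ, fun e he => ?_⟩
        have := heq e he
        show (Finset.univ.filter (fun i => e ∈ J i)).card
          = 1 + (Finset.univ.filter (fun j => e ∈ N j)).card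
        omega
      have : lVal G ≤ (t : ℕ∞) := sInf_le ⟨t, htmem, rfl⟩
      exact ne_top_of_lt (lt_of_le_of_lt this (by exact_mod_cast WithTop.coe_lt_top t))
    · have htmem : 0 ∈ lSet G := by
        refine ⟨fun i => i.elim0, fun i => i.elim0, fun _ => ∅, ?_, fun e he => ?_⟩
        · intro i
          exact ⟨fun e he => absurd he (by simp), fun w => absurd ⟨w⟩ hV⟩
        · exfalso
          induction e using Sym2.ind with
          | _ a b => exact hV ⟨a⟩
      have : lVal G ≤ (0 : ℕ∞) := sInf_le ⟨0, htmem, rfl⟩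
      exact ne_top_of_lt (lt_of_le_of_lt this (by exact_mod_cast WithTop.coe_lt_top 0))
end

section
/- For the Petersen graph P, the all-ones vector does not belong to the perfect matching lattice Lat(P); consequently l(P) = +∞. -/
open Finset
open scoped Classical

/-- The vertices of the Petersen graph: 2-element subsets of a 5-element set. -/
def PetersenVert : Type := {s : Finset (Fin 5) // s.card = 2}

noncomputable instance : Fintype PetersenVert :=
  inferInstanceAs (Fintype {s : Finset (Fin 5) // s.card = 2})

/-- The Petersen graph, as the Kneser graph `K(5,2)`. -/
def petersen : SimpleGraph PetersenVert where
  Adj a b := Disjoint a.1 b.1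
  symm := ⟨fun a b h => h.symm⟩
  loopless := by
    constructor
    intro a h
    have h2 := a.2
    rw [disjoint_self] at h
    rw [h] at h2
    simp at h2

/-! Every perfect matching `M` of the Petersen graph meets the outer 5-cycle `C` in an even
number of edges. Two consecutive edges of `C` share a vertex, so `M` meets `C` in at most two
edges; and if it contained exactly one edge of `C`, the other three outer vertices would be
matched along their spokes, leaving no partner for the inner vertex attached to an endpoint of
that edge. Hence every integer combination of perfect matchings has even sum over `C`, whereas
the all-ones vector has sum 5 there. Finally, a Class I multigraph obtained by adding `k`
perfect matchings splits into `k + 3` perfect matchings, which would write the all-ones vector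
as the sum of those minus the `k` added ones. -/

section Lattice

variable {V : Type*} {G : SimpleGraph V}

theorem sum_card_filter_mem_eq_sum_card_inter {k : ℕ} (S : Finset (Sym2 V))
    (F : Fin k → Finset (Sym2 V)) :
    ∑ e ∈ S, #{i | e ∈ F i} = ∑ i, #(S ∩ F i) := by
  simp only [card_filter, ← filter_mem_eq_inter]
  rw [sum_comm]

theorem even_sum_card_filter_mem {S : Finset (Sym2 V)}
    (hS : ∀ M, IsPM G M → Even #(S ∩ M)) {k : ℕ} {F : Fin k → Finset (Sym2 V)}
    (hF : ∀ i, IsPM G (F i)) : Even (∑ e ∈ S, #{i | e ∈ F i}) := by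
  rw [sum_card_filter_mem_eq_sum_card_inter]
  exact even_sum _ fun i _ => hS _ (hF i)

theorem not_onesInLat_of_odd_card {S : Finset (Sym2 V)} (hSG : ∀ e ∈ S, e ∈ G.edgeSet)
    (hS : Odd #S) (hM : ∀ M, IsPM G M → Even #(S ∩ M)) : ¬ OnesInLat G := by
  rintro ⟨s, t, J, N, hJ, hN, hJN⟩
  have hsum : ∑ e ∈ S, ((#{i | e ∈ J i} : ℤ) - #{j | e ∈ N j}) = #S := by
    rw [sum_congr rfl fun e he => hJN e (hSG e he)]
    simp
  rw [sum_sub_distrib] at hsum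
  have hJ' := (even_sum_card_filter_mem hM hJ).natCast (α := ℤ)
  have hN' := (even_sum_card_filter_mem hM hN).natCast (α := ℤ)
  push_cast at hJ' hN'
  have hodd := hS.natCast (R := ℤ)
  rw [← hsum] at hodd
  exact Int.not_even_iff_odd.2 hodd (hJ'.sub hN')

theorem OnesInLat.of_mem_lSet {k : ℕ} (hk : k ∈ lSet G) : OnesInLat G := by
  obtain ⟨M, hM, F, hF, hFM⟩ := hk
  refine ⟨k + 3, k, F, M, hF, hM, fun e he => ?_⟩
  rw [hFM e he]
  push_cast
  ring

theorem lVal_eq_top_of_not_onesInLat (h : ¬ OnesInLat G) : lVal G = ⊤ := by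
  have : lSet G = ∅ := Set.eq_empty_of_forall_notMem fun k hk => h (.of_mem_lSet hk)
  simp [lVal, this]

end Lattice

section PerfectMatching

variable {V : Type*} {G : SimpleGraph V} {M : Finset (Sym2 V)}

theorem IsPM.eq_of_mem (hM : IsPM G M) {v : V} {e f : Sym2 V} (he : e ∈ M) (hf : f ∈ M)
    (hve : v ∈ e) (hvf : v ∈ f) : e = f :=
  card_le_one.1 (hM.2 v).le e (mem_filter.2 ⟨he, hve⟩) f (mem_filter.2 ⟨hf, hvf⟩)

theorem IsPM.exists_adj_mem (hM : IsPM G M) (v : V) : ∃ w, G.Adj v w ∧ s(v, w) ∈ M := by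
  obtain ⟨e, he⟩ := card_eq_one.1 (hM.2 v)
  obtain ⟨heM, hve⟩ := mem_filter.1 (he ▸ mem_singleton_self e)
  obtain ⟨w, rfl⟩ := Sym2.mem_iff_exists.1 hve
  exact ⟨w, hM.1 _ heM, heM⟩

end PerfectMatching

namespace Petersen

instance : DecidableEq PetersenVert :=
  inferInstanceAs (DecidableEq {s : Finset (Fin 5) // s.card = 2})

instance : DecidableRel petersen.Adj :=
  fun a b => inferInstanceAs (Decidable (Disjoint a.1 b.1))

-- `outer i` runs around a 5-cycle and `inner i` is the third neighbour of `outer i`.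
def outer (i : Fin 5) : PetersenVert := ⟨{2 * i, 2 * i + 1}, by revert i; decide⟩

def inner (i : Fin 5) : PetersenVert := ⟨{2 * i + 2, 2 * i + 4}, by revert i; decide⟩

def pentagonEdge (i : Fin 5) : Sym2 PetersenVert := s(outer i, outer (i + 1))

def spoke (i : Fin 5) : Sym2 PetersenVert := s(outer i, inner i)

def pentagon : Finset (Sym2 PetersenVert) := univ.image pentagonEdge

theorem card_pentagon : #pentagon = 5 := by decide

theorem pentagon_subset_edgeSet : ∀ e ∈ pentagon, e ∈ petersen.edgeSet := by decide

theorem outer_adj : ∀ i w, petersen.Adj (outer i) w →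
    s(outer i, w) = pentagonEdge i ∨ s(outer i, w) = pentagonEdge (i + 4) ∨ w = inner i := by
  decide

theorem inner_adj : ∀ i w, petersen.Adj (inner i) w →
    ∃ e ∈ ({spoke (i + 2), spoke (i + 3), pentagonEdge i} : Finset _),
      w ∈ e ∧ e ≠ s(inner i, w) := by
  decide

theorem pentagonEdge_injective : Function.Injective pentagonEdge := by decide

theorem exists_eq_singleton_of_odd_card_of_add_one_notMem :
    ∀ T : Finset (Fin 5), (∀ i ∈ T, i + 1 ∉ T) → Odd #T → ∃ i, T = {i} := by
  decide

variable {M : Finset (Sym2 PetersenVert)}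

theorem spoke_mem (hM : IsPM petersen M) {j : Fin 5} (hj : pentagonEdge j ∉ M)
    (hj' : pentagonEdge (j + 4) ∉ M) : spoke j ∈ M := by
  obtain ⟨w, hw, hwM⟩ := hM.exists_adj_mem (outer j)
  rcases outer_adj j w hw with h | h | rfl
  · exact absurd (h ▸ hwM) hj
  · exact absurd (h ▸ hwM) hj'
  · exact hwM

theorem not_forall_pentagonEdge_mem_iff_eq (hM : IsPM petersen M) (i : Fin 5) :
    ¬ ∀ j, pentagonEdge j ∈ M ↔ j = i := by
  intro hi
  have hspoke (k : Fin 5) (hk : k ≠ 0) (hk' : k + 4 ≠ 0) : spoke (i + k) ∈ M :=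
    spoke_mem hM (by simpa [hi]) (by simpa [hi, add_assoc])
  obtain ⟨w, hw, hwM⟩ := hM.exists_adj_mem (inner i)
  obtain ⟨e, he, hwe, hne⟩ := inner_adj i w hw
  have heM : e ∈ M := by
    simp only [mem_insert, mem_singleton] at he
    rcases he with rfl | rfl | rfl
    exacts [hspoke 2 (by decide) (by decide), hspoke 3 (by decide) (by decide), (hi i).2 rfl]
  exact hne (hM.eq_of_mem heM hwM hwe (Sym2.mem_mk_right _ _))

theorem even_card_pentagon_inter (hM : IsPM petersen M) : Even #(pentagon ∩ M) := by
  set T : Finset (Fin 5) := {i | pentagonEdge i ∈ M} with hT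
  have hcard : #(pentagon ∩ M) = #T := by
    rw [pentagon, ← filter_mem_eq_inter, filter_image,
      card_image_of_injective _ pentagonEdge_injective]
  have hconsec : ∀ i ∈ T, i + 1 ∉ T := by
    intro i hi hi'
    simp only [hT, mem_filter, mem_univ, true_and] at hi hi'
    have := pentagonEdge_injective <|
      hM.eq_of_mem hi hi' (Sym2.mem_mk_right _ _) (Sym2.mem_mk_left _ _)
    simp at this
  by_contra hodd
  obtain ⟨i, hi⟩ := exists_eq_singleton_of_odd_card_of_add_one_notMem T hconsec
    (Nat.not_even_iff_odd.1 (hcard ▸ hodd))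
  exact not_forall_pentagonEdge_mem_iff_eq hM i fun j => by
    simpa [hT] using congr(j ∈ $hi)

end Petersen

open Petersen in
theorem not_onesInLat_petersen : ¬ OnesInLat petersen :=
  not_onesInLat_of_odd_card pentagon_subset_edgeSet (by rw [card_pentagon]; decide)
    -- the two sides differ only in the `DecidableEq` instance behind `∩`
    fun _ hM => by convert even_card_pentagon_inter hM

/-- For the Petersen graph `P`, the all-ones vector is not in `Lat(P)`; consequently
`l(P) = +∞`. -/
theorem stmt3 : ¬ OnesInLat petersen ∧ lVal petersen = ⊤ :=
  ⟨not_onesInLat_petersen, lVal_eq_top_of_not_onesInLat not_onesInLat_petersen⟩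
end

section
/- For every odd n ≥ 3 and every perfect matching M of the flower snark F_n, F_n contains a DF 6-pole (the union of two consecutive SF 6-poles) that is good with respect to M, i.e. whose six boundary dangling edges meet M in exactly one left dangling edge l_j^i and the corresponding right dangling edge r_j^{i+1} for some j. -/
open Finset
open scoped Classical

/-- The flower snark `F n` (`n` odd).  Block `i` is an SF 6-pole with four vertices:
the hub `(i,0)`, joined by the spoke to `(i,1)` and by the two other internal edges to
`(i,2)` and `(i,3)`.  The dangling edges of block `i` are realised by joining each right
dangling edge `r_j^i` to the left dangling edge `l_j^{i+1}`: `(i,1)-(i+1,1)` (j = 1),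
`(i,3)-(i+1,2)` (j = 2) and `(i,2)-(i+1,3)` (j = 3). -/
def flowerSnark (n : ℕ) [NeZero n] : SimpleGraph (Fin n × Fin 4) :=
  SimpleGraph.fromRel (fun p q =>
    (p.1 = q.1 ∧ p.2 = 0 ∧ q.2 ≠ 0) ∨
    (q.1 = p.1 + 1 ∧ ((p.2 = 1 ∧ q.2 = 1) ∨ (p.2 = 3 ∧ q.2 = 2) ∨ (p.2 = 2 ∧ q.2 = 3))))

/-- The `j`-th left dangling edge `l_j^i` of the SF 6-pole `F_i` of the flower snark,
as an edge of the whole graph (joined with `r_j^{i-1}`). -/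
def leftEdge (n : ℕ) [NeZero n] (i : Fin n) (j : Fin 3) : Sym2 (Fin n × Fin 4) :=
  if j = 0 then s((i - 1, 1), (i, 1))
  else if j = 1 then s((i - 1, 3), (i, 2))
  else s((i - 1, 2), (i, 3))

/-!
In a perfect matching of `F_n` each SF 6-pole covers its four vertices by one internal edge and
two dangling edges, so the numbers of matched left dangling edges of two consecutive poles add
up to `2`; around a cycle of odd length this forces exactly one matched left dangling edge
`l_{c i}^i` per pole. The rim vertex of colour `j` of pole `i` is the common end of `l_j^i` and
`l_{-j}^{i+1}` (colours in `ℤ/3`), hence `c i + c (i + 1) ≠ 0`. If no DF 6-pole were good, then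
`c (i + 2) ≠ c i`, and the nonzero sums `c i + c (i + 1)` would alternate between `1` and `-1`
around the odd cycle, which is impossible.
-/

open Fin.NatCast in
theorem Function.Involutive.isFixedPt_of_odd_cycle {α : Type*} {σ : α → α}
    (hσ : Function.Involutive σ) {n : ℕ} [NeZero n] (hn : Odd n) {f : Fin n → α}
    (hf : ∀ i, f (i + 1) = σ (f i)) (i : Fin n) : Function.IsFixedPt σ (f i) := by
  have hiter : ∀ k : ℕ, f (i + (k : Fin n)) = σ^[k] (f i) := by
    intro k
    induction k with
    | zero => simp
    | succ k ih => rw [Nat.cast_succ, ← add_assoc, hf, ih, Function.iterate_succ_apply']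
  have := hiter n
  rwa [Fin.natCast_self, add_zero, hσ.iterate_odd hn, eq_comm] at this

theorem IsPM.ite_add_ite_add_ite_eq_one {V : Type*} [DecidableEq V] {G : SimpleGraph V}
    {M : Finset (Sym2 V)} (hM : IsPM G M) {v a b c : V} (hab : a ≠ b) (hac : a ≠ c) (hbc : b ≠ c)
    (hadj : ∀ w, G.Adj v w → w = a ∨ w = b ∨ w = c) :
    ((if s(v, a) ∈ M then 1 else 0) + (if s(v, b) ∈ M then 1 else 0) +
      (if s(v, c) ∈ M then 1 else 0) : ℕ) = 1 := by
  have hedges : M.filter (v ∈ ·) = ({s(v, a), s(v, b), s(v, c)} : Finset _).filter (· ∈ M) := by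
    ext e
    simp only [mem_filter, mem_insert, mem_singleton]
    constructor
    · rintro ⟨he, hve⟩
      obtain ⟨w, rfl⟩ := Sym2.mem_iff_exists.mp hve
      refine ⟨?_, he⟩
      rcases hadj w (hM.1 _ he) with rfl | rfl | rfl <;> simp
    · rintro ⟨he | he | he, hM⟩ <;> subst he <;> exact ⟨hM, Sym2.mem_mk_left _ _⟩
  have hcard : #(M.filter (v ∈ ·)) = 1 := by convert hM.2 v
  rwa [hedges, card_filter, sum_insert, sum_insert, sum_singleton, ← add_assoc] at hcard
  · rwa [mem_singleton, Sym2.congr_right]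
  · simpa only [mem_insert, mem_singleton, Sym2.congr_right, not_or] using ⟨hab, hac⟩

section FlowerSnark

variable {n : ℕ} [NeZero n]

-- The rim vertex `(i, j.succ)` is the right end of `l_j^i` and the left end of `l_{-j}^{i+1}`.
theorem leftEdge_eq (i : Fin n) (j : Fin 3) :
    leftEdge n i j = s((i - 1, (-j).succ), (i, j.succ)) := by
  fin_cases j <;> rfl

theorem flowerSnark_adj_hub {i : Fin n} {w : Fin n × Fin 4} (h : (flowerSnark n).Adj (i, 0) w) :
    w = (i, 1) ∨ w = (i, 2) ∨ w = (i, 3) := by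
  obtain ⟨w₁, w₂⟩ := w
  simp only [flowerSnark, SimpleGraph.fromRel_adj] at h
  fin_cases w₂ <;> simp_all

theorem flowerSnark_adj_rim {i : Fin n} {j : Fin 3} {w : Fin n × Fin 4}
    (h : (flowerSnark n).Adj (i, j.succ) w) :
    w = (i, 0) ∨ w = (i - 1, (-j).succ) ∨ w = (i + 1, (-j).succ) := by
  obtain ⟨w₁, w₂⟩ := w
  simp only [flowerSnark, SimpleGraph.fromRel_adj] at h
  fin_cases j <;> fin_cases w₂ <;> simp_all +decide [eq_sub_iff_add_eq, eq_comm] <;> tauto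

theorem Fin.sub_one_ne_add_one (h3 : 3 ≤ n) (i : Fin n) : i - 1 ≠ i + 1 := by
  intro h
  rw [sub_eq_iff_eq_add, add_assoc, left_eq_add, Fin.ext_iff] at h
  simp only [Fin.val_add, Fin.coe_ofNat_eq_mod, Nat.mod_eq_of_lt (by omega : 1 < n),
    Nat.mod_eq_of_lt (by omega : 1 + 1 < n), Nat.zero_mod] at h
  omega

variable {M : Finset (Sym2 (Fin n × Fin 4))}

theorem IsPM.flowerSnark_hub (hM : IsPM (flowerSnark n) M) (i : Fin n) :
    ∑ j : Fin 3, (if s((i, 0), (i, j.succ)) ∈ M then 1 else 0) = 1 := by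
  rw [Fin.sum_univ_three]
  exact hM.ite_add_ite_add_ite_eq_one (by simp) (by simp) (by simp) fun _ => flowerSnark_adj_hub

theorem IsPM.flowerSnark_rim (h3 : 3 ≤ n) (hM : IsPM (flowerSnark n) M) (i : Fin n) (j : Fin 3) :
    (if s((i, 0), (i, j.succ)) ∈ M then 1 else 0) + (if leftEdge n i j ∈ M then 1 else 0) +
      (if leftEdge n (i + 1) (-j) ∈ M then 1 else 0) = 1 := by
  rw [leftEdge_eq, leftEdge_eq, neg_neg, add_sub_cancel_right, Sym2.eq_swap (a := (i, 0)),
    Sym2.eq_swap (a := (i - 1, _))]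
  exact hM.ite_add_ite_add_ite_eq_one (by simp [(Fin.succ_ne_zero _).symm])
    (by simp [(Fin.succ_ne_zero _).symm]) (by simp [Fin.sub_one_ne_add_one h3])
    fun _ => flowerSnark_adj_rim

def leftCount (M : Finset (Sym2 (Fin n × Fin 4))) (i : Fin n) : ℕ :=
  #{j | leftEdge n i j ∈ M}

theorem IsPM.leftCount_add_leftCount_add_one (h3 : 3 ≤ n) (hM : IsPM (flowerSnark n) M)
    (i : Fin n) : leftCount M i + leftCount M (i + 1) = 2 := by
  have hrim := Finset.sum_congr rfl fun j (_ : j ∈ univ) => hM.flowerSnark_rim h3 i j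
  have hright : ∑ j : Fin 3, (if leftEdge n (i + 1) (-j) ∈ M then 1 else 0) =
      ∑ j : Fin 3, if leftEdge n (i + 1) j ∈ M then 1 else 0 :=
    Equiv.sum_comp (Equiv.neg (Fin 3)) fun j => if leftEdge n (i + 1) j ∈ M then 1 else 0
  rw [sum_add_distrib, sum_add_distrib, hM.flowerSnark_hub, hright] at hrim
  simp only [sum_const, card_univ, Fintype.card_fin, smul_eq_mul, mul_one] at hrim
  simp only [leftCount, card_filter]
  omega

theorem IsPM.leftCount_eq_one (hodd : Odd n) (h3 : 3 ≤ n) (hM : IsPM (flowerSnark n) M)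
    (i : Fin n) : leftCount M i = 1 := by
  have hσ : Function.Involutive fun x : ℤ => 2 - x := sub_sub_cancel 2
  have := hσ.isFixedPt_of_odd_cycle hodd (f := fun i => (leftCount M i : ℤ))
    (fun i => by have := hM.leftCount_add_leftCount_add_one h3 i; omega) i
  simp only [Function.IsFixedPt] at this
  omega

theorem IsPM.exists_leftEdge_mem_iff (hodd : Odd n) (h3 : 3 ≤ n) (hM : IsPM (flowerSnark n) M)
    (i : Fin n) : ∃ j, ∀ j', leftEdge n i j' ∈ M ↔ j' = j := by
  obtain ⟨j, hj⟩ := card_eq_one.mp (hM.leftCount_eq_one hodd h3 i)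
  exact ⟨j, fun j' => by simpa using Finset.ext_iff.mp hj j'⟩

theorem IsPM.add_ne_zero_of_leftEdge_mem (h3 : 3 ≤ n) (hM : IsPM (flowerSnark n) M)
    {i : Fin n} {a b : Fin 3} (ha : leftEdge n i a ∈ M) (hb : leftEdge n (i + 1) b ∈ M) :
    a + b ≠ 0 := by
  intro hab
  have hrim := hM.flowerSnark_rim h3 i a
  rw [← eq_neg_of_add_eq_zero_right hab, if_pos ha, if_pos hb] at hrim
  omega

end FlowerSnark

/-- For every odd `n ≥ 3` and every perfect matching `M` of the flower snark `F n`,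
some DF 6-pole (two consecutive SF 6-poles `F_i`, `F_{i+1}`) is good with respect to
`M`: its boundary meets `M` exactly in the two edges `l_j^i` and `r_j^{i+1} = l_j^{i+2}`
for some `j`. -/
theorem stmt12 (n : ℕ) [NeZero n] (hodd : Odd n) (h3 : 3 ≤ n)
    (M : Finset (Sym2 (Fin n × Fin 4))) (hM : IsPM (flowerSnark n) M) :
    ∃ (i : Fin n) (j : Fin 3), ∀ j' : Fin 3,
      (leftEdge n i j' ∈ M ↔ j' = j) ∧ (leftEdge n (i + 2) j' ∈ M ↔ j' = j) := by
  choose c hc using hM.exists_leftEdge_mem_iff hodd h3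
  by_contra hbad
  have hne : ∀ i, c (i + 1 + 1) ≠ c i := fun i heq => hbad
    ⟨i, c i, fun j' => ⟨hc i j', by rw [hc (i + 2) j', ← heq, show i + 2 = i + 1 + 1 by grind]⟩⟩
  set s : Fin n → Fin 3 := fun i => c i + c (i + 1)
  have hs0 : ∀ i, s i ≠ 0 := fun i =>
    hM.add_ne_zero_of_leftEdge_mem h3 ((hc i _).2 rfl) ((hc (i + 1) _).2 rfl)
  have hflip : ∀ i, s (i + 1) = -s i := by
    intro i
    have hneg_of_ne : ∀ a b c : Fin 3, a + b ≠ 0 → b + c ≠ 0 → c ≠ a → b + c = -(a + b) := by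
      decide
    exact hneg_of_ne _ _ _ (hs0 i) (hs0 (i + 1)) (hne i)
  have hfix := neg_involutive.isFixedPt_of_odd_cycle hodd hflip 0
  have hzero_of_neg_eq : ∀ a : Fin 3, -a = a → a = 0 := by decide
  exact hs0 0 (hzero_of_neg_eq _ hfix)
end

section
/- Let G be a bridgeless cubic graph that admits a 2-factor C contained in no cycle double cover of G, and let N = E(G) \ C be the complementary perfect matching. Then the multigraph G + N is Class II, i.e. not 4-edge-colourable. -/
open Finset
open scoped Classical

/-- An even subgraph (a "cycle") of `G`, given by its edge set: every vertex has even
degree. -/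
def IsEvenSub {V : Type*} (G : SimpleGraph V) (D : Finset (Sym2 V)) : Prop :=
  (∀ e ∈ D, e ∈ G.edgeSet) ∧ ∀ v : V, Even ((D.filter (fun e => v ∈ e)).card)

/-- A cycle cover of `G`: a family of cycles (even subgraphs) covering every edge. -/
def IsCycleCover {V : Type*} (G : SimpleGraph V) (k : ℕ)
    (D : Fin k → Finset (Sym2 V)) : Prop :=
  (∀ i, IsEvenSub G (D i)) ∧ ∀ e ∈ G.edgeSet, ∃ i, e ∈ D i

/-- `scc G`: the minimum total length of a cycle cover of `G`. -/
noncomputable def scc {V : Type*} (G : SimpleGraph V) : ℕ :=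
  sInf {L | ∃ (k : ℕ) (D : Fin k → Finset (Sym2 V)),
    IsCycleCover G k D ∧ L = ∑ i, (D i).card}

/-- A 2-factor of `G`, given by its edge set: every vertex lies on exactly two edges. -/
def IsTwoFactor {V : Type*} (G : SimpleGraph V) (C : Finset (Sym2 V)) : Prop :=
  (∀ e ∈ C, e ∈ G.edgeSet) ∧ ∀ v : V, (C.filter (fun e => v ∈ e)).card = 2

/-- A cycle double cover of `G`: a family of cycles covering every edge exactly twice. -/
def IsCDC {V : Type*} (G : SimpleGraph V) (k : ℕ) (D : Fin k → Finset (Sym2 V)) : Prop :=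
  (∀ i, IsEvenSub G (D i)) ∧
    ∀ e ∈ G.edgeSet, (Finset.univ.filter (fun i => e ∈ D i)).card = 2

/-- If a bridgeless cubic graph `G` has a 2-factor `C` contained in no cycle double
cover of `G`, and `N = E(G) \ C` is the complementary perfect matching, then `G + N`
is Class II, i.e. not 4-edge-colourable. -/
theorem stmt14 {V : Type*} [Fintype V] (G : SimpleGraph V)
    (hcub : IsCubic G) (hbl : IsBridgeless G)
    (C N : Finset (Sym2 V)) (hC : IsTwoFactor G C) (hN : N = G.edgeFinset \ C)
    (hnoCDC : ¬ ∃ (k : ℕ) (D : Fin k → Finset (Sym2 V)), IsCDC G k D ∧ ∃ i, D i = C) :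
    ¬ ClassIPlus G (fun e => if e ∈ N then 1 else 0) 4 := by
  rintro ⟨F, hFpm, hFcnt⟩
  classical
  have hCsub : ∀ e ∈ C, e ∈ G.edgeSet := hC.1
  have hNsub : ∀ e ∈ N, e ∈ G.edgeSet := by
    intro e he; rw [hN, Finset.mem_sdiff] at he; exact SimpleGraph.mem_edgeFinset.1 he.1
  have hNC : ∀ e ∈ N, e ∉ C := by
    intro e he; rw [hN, Finset.mem_sdiff] at he; exact he.2
  have hCN : ∀ e ∈ G.edgeSet, e ∉ N → e ∈ C := by
    intro e he h
    rw [hN, Finset.mem_sdiff] at h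
    by_contra hc
    exact h ⟨SimpleGraph.mem_edgeFinset.2 he, hc⟩
  -- N has degree 1 at every vertex
  have hNdeg : ∀ v, (N.filter (fun e => v ∈ e)).card = 1 := by
    intro v
    have h3 : (G.edgeFinset.filter (fun e => v ∈ e)).card = 3 := by
      rw [← SimpleGraph.incidenceFinset_eq_filter, SimpleGraph.card_incidenceFinset_eq_degree]
      exact hcub v
    have heq : N.filter (fun e => v ∈ e)
        = G.edgeFinset.filter (fun e => v ∈ e) \ C.filter (fun e => v ∈ e) := by
      subst hN; ext e; simp [Finset.mem_sdiff, Finset.mem_filter]; tauto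
    have hsub : C.filter (fun e => v ∈ e) ⊆ G.edgeFinset.filter (fun e => v ∈ e) := by
      intro e he
      rw [Finset.mem_filter] at he ⊢
      exact ⟨SimpleGraph.mem_edgeFinset.2 (hCsub e he.1), he.2⟩
    rw [heq, Finset.card_sdiff_of_subset hsub, h3, hC.2 v]
  -- symmetric differences N ∆ F i are even subgraphs
  have hfilter : ∀ (A B : Finset (Sym2 V)) (v : V),
      (symmDiff A B).filter (fun e => v ∈ e)
        = symmDiff (A.filter (fun e => v ∈ e)) (B.filter (fun e => v ∈ e)) := by
    intro A B v; ext e; simp [Finset.mem_symmDiff, Finset.mem_filter]; tauto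
  have hEvenSym : ∀ i : Fin 4, IsEvenSub G (symmDiff N (F i)) := by
    intro i
    constructor
    · intro e he
      rw [Finset.mem_symmDiff] at he
      rcases he with ⟨h1, _⟩ | ⟨h1, _⟩
      · exact hNsub e h1
      · exact (hFpm i).1 e h1
    · intro v
      rw [hfilter]
      obtain ⟨a, ha⟩ := Finset.card_eq_one.1 (hNdeg v)
      obtain ⟨b, hb⟩ := Finset.card_eq_one.1 ((hFpm i).2 v)
      rw [ha, hb]
      by_cases hab : a = b
      · subst hab; simp [symmDiff_self]
      · have : symmDiff ({a} : Finset (Sym2 V)) {b} = {a, b} := by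
          ext x
          simp only [Finset.mem_symmDiff, Finset.mem_singleton, Finset.mem_insert]
          constructor
          · rintro (⟨rfl, -⟩ | ⟨rfl, -⟩) <;> simp
          · rintro (rfl | rfl)
            · exact Or.inl ⟨rfl, hab⟩
            · exact Or.inr ⟨rfl, fun h => hab h.symm⟩
        rw [this, Finset.card_pair hab]
        exact ⟨1, rfl⟩
  -- build the CDC
  set D : Fin 5 → Finset (Sym2 V) :=
    fun i => if h : (i : ℕ) < 4 then symmDiff N (F ⟨i, h⟩) else C with hD
  apply hnoCDC
  have hD4 : D 4 = C := by
    rw [hD]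
    show (if h : ((4:Fin 5):ℕ) < 4 then symmDiff N (F ⟨_, h⟩) else C) = C
    rw [dif_neg (by decide : ¬ ((4:Fin 5):ℕ) < 4)]
  refine ⟨5, D, ⟨?_, ?_⟩, ⟨4, hD4⟩⟩
  · intro i
    by_cases hi : (i : ℕ) < 4
    · rw [hD]
      show IsEvenSub G (if h : (i:ℕ) < 4 then symmDiff N (F ⟨i, h⟩) else C)
      rw [dif_pos hi]; exact hEvenSym _
    · rw [hD]
      show IsEvenSub G (if h : (i:ℕ) < 4 then symmDiff N (F ⟨i, h⟩) else C)
      rw [dif_neg hi]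
      exact ⟨hCsub, fun v => ⟨1, by rw [hC.2 v]⟩⟩
  · intro e he
    have h := hFcnt e he
    rw [Finset.card_filter, Fin.sum_univ_four] at h
    rw [Finset.card_filter, Fin.sum_univ_five]
    have h0 : D 0 = symmDiff N (F 0) := by
      rw [hD]
      show (if h : ((0:Fin 5):ℕ) < 4 then symmDiff N (F ⟨_, h⟩) else C) = _
      rw [dif_pos (by decide : ((0:Fin 5):ℕ) < 4)]; rfl
    have h1 : D 1 = symmDiff N (F 1) := by
      rw [hD]
      show (if h : ((1:Fin 5):ℕ) < 4 then symmDiff N (F ⟨_, h⟩) else C) = _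
      rw [dif_pos (by decide : ((1:Fin 5):ℕ) < 4)]; rfl
    have h2 : D 2 = symmDiff N (F 2) := by
      rw [hD]
      show (if h : ((2:Fin 5):ℕ) < 4 then symmDiff N (F ⟨_, h⟩) else C) = _
      rw [dif_pos (by decide : ((2:Fin 5):ℕ) < 4)]; rfl
    have h3 : D 3 = symmDiff N (F 3) := by
      rw [hD]
      show (if h : ((3:Fin 5):ℕ) < 4 then symmDiff N (F ⟨_, h⟩) else C) = _
      rw [dif_pos (by decide : ((3:Fin 5):ℕ) < 4)]; rfl
    have h4 : D 4 = C := hD4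
    rw [h0, h1, h2, h3, h4]
    by_cases heN : e ∈ N
    · have heC : e ∉ C := hNC e heN
      simp only [heN, if_true] at h
      simp only [Finset.mem_symmDiff, heN, heC, true_and, not_true, and_false,
        false_or, or_false, if_false, ite_not]
      split_ifs at h ⊢ <;> omega
    · have heC : e ∈ C := hCN e he heN
      simp only [heN, if_false] at h
      simp only [Finset.mem_symmDiff, heN, heC, false_and, not_false_iff, and_true,
        false_or, or_false, if_true]
      split_ifs at h ⊢ <;> omega
end

section
/- For every bridgeless cubic graph G: scc(G) > (4/3)·|E(G)| if and only if G is frumious (i.e. for every perfect matching M of G and every positive integer t, the multigraph G + tM is Class II); otherwise scc(G) = (4/3)·|E(G)|. -/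
/-!
At a vertex `v` of a cubic graph, the degrees of the cycles of a cover sum to an even number that
is at least `3`, hence at least `4`; summing over `v` gives `2 · length ≥ 4 |V| = (8/3) |E|`.
In the equality case every vertex sees the coverage pattern `(2, 1, 1)`, so the doubly covered
edges form a perfect matching `M`, each `D i ∆ M` is a perfect matching, and these together with
four copies of `M` colour `G + (k + 1) M`. Conversely, if the perfect matchings `F i` colour
`G + t M`, the cycles `F i ∆ M` cover `M` twice and every other edge once, with total length
`|E| + |M| = (4/3) |E|`.
-/

open Finset
open scoped Classical

/-- `G` is frumious: for every perfect matching `M` of `G` and every positive integer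
`t`, the multigraph `G + tM` is Class II, i.e. not `(t+3)`-edge-colourable. -/
def Frumious {V : Type*} (G : SimpleGraph V) : Prop :=
  ∀ M : Finset (Sym2 V), IsPM G M → ∀ t : ℕ, 0 < t →
    ¬ ClassIPlus G (fun e => if e ∈ M then t else 0) (t + 3)

open SimpleGraph
open scoped symmDiff

namespace Finset

variable {α : Type*}

lemma card_symmDiff_add_two_mul_card_inter [DecidableEq α] (s t : Finset α) :
    #(s ∆ t) + 2 * #(s ∩ t) = #s + #t := by
  rw [symmDiff_def, sup_eq_union, card_union_of_disjoint disjoint_sdiff_sdiff]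
  have hs := card_sdiff_add_card_inter s t
  have ht := card_sdiff_add_card_inter t s
  rw [inter_comm t s] at ht
  omega

lemma filter_symmDiff [DecidableEq α] (p : α → Prop) [DecidablePred p] (s t : Finset α) :
    (s ∆ t).filter p = s.filter p ∆ t.filter p := by
  ext; simp only [mem_filter, mem_symmDiff]; tauto

lemma le_two_and_card_filter_eq_two_of_sum_eq_four {s : Finset α} {f : α → ℕ} (hs : #s = 3)
    (hf : ∀ a ∈ s, 1 ≤ f a) (hsum : ∑ a ∈ s, f a = 4) :
    (∀ a ∈ s, f a ≤ 2) ∧ #{a ∈ s | f a = 2} = 1 := by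
  obtain ⟨a, b, c, hab, hac, hbc, rfl⟩ := card_eq_three.mp hs
  simp only [mem_insert, mem_singleton, forall_eq_or_imp, forall_eq] at hf ⊢
  rw [sum_insert (by simp [hab, hac]), sum_insert (by simp [hbc]), sum_singleton] at hsum
  refine ⟨by omega, ?_⟩
  rw [filter_insert, filter_insert, filter_singleton]
  by_cases ha : f a = 2 <;> by_cases hb : f b = 2 <;> by_cases hc : f c = 2 <;>
    simp [*] <;> omega

end Finset

section CoverCount

variable {α ι : Type*} [DecidableEq α] [Fintype ι]

def coverCount (D : ι → Finset α) (a : α) : ℕ := #{i | a ∈ D i}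

lemma sum_card_inter_eq_sum_coverCount (D : ι → Finset α) (S : Finset α) :
    ∑ i, #(D i ∩ S) = ∑ a ∈ S, coverCount D a := by
  simp_rw [coverCount, card_filter, inter_comm _ S, ← filter_mem_eq_inter, card_filter]
  exact sum_comm

lemma sum_card_eq_sum_coverCount {D : ι → Finset α} {S : Finset α} (hD : ∀ i, D i ⊆ S) :
    ∑ i, #(D i) = ∑ a ∈ S, coverCount D a := by
  simp_rw [← sum_card_inter_eq_sum_coverCount, inter_eq_left.mpr (hD _)]

lemma coverCount_le_card (D : ι → Finset α) (a : α) : coverCount D a ≤ Fintype.card ι :=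
  card_filter_le _ _

lemma exists_mem_of_coverCount_pos {D : ι → Finset α} {a : α} (h : 0 < coverCount D a) :
    ∃ i, a ∈ D i := by
  obtain ⟨i, hi⟩ := card_pos.mp h
  exact ⟨i, (mem_filter.mp hi).2⟩

lemma coverCount_symmDiff (D : ι → Finset α) (M : Finset α) (a : α) :
    coverCount (fun i => D i ∆ M) a =
      if a ∈ M then Fintype.card ι - coverCount D a else coverCount D a := by
  unfold coverCount
  split_ifs with ha
  · rw [← card_compl, compl_filter]
    simp [mem_symmDiff, ha]
  · simp [mem_symmDiff, ha]

lemma coverCount_const (s : Finset α) (a : α) :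
    coverCount (fun _ : ι => s) a = if a ∈ s then Fintype.card ι else 0 := by
  split_ifs with ha <;> simp [coverCount, ha]

lemma coverCount_append {m n : ℕ} (D : Fin m → Finset α) (D' : Fin n → Finset α) (a : α) :
    coverCount (Fin.append D D') a = coverCount D a + coverCount D' a := by
  simp only [coverCount, card_filter, Fin.sum_univ_add, Fin.append_left, Fin.append_right]

end CoverCount

section Degree

variable {V : Type*}

def degIn [DecidableEq V] (A : Finset (Sym2 V)) (v : V) : ℕ := #{e ∈ A | v ∈ e}

lemma degIn_symmDiff_add [DecidableEq V] (A B : Finset (Sym2 V)) (v : V) :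
    degIn (A ∆ B) v + 2 * degIn (A ∩ B) v = degIn A v + degIn B v := by
  rw [degIn, degIn, filter_symmDiff, filter_inter_distrib]
  exact card_symmDiff_add_two_mul_card_inter _ _

lemma degIn_inter [DecidableEq V] (A B : Finset (Sym2 V)) (v : V) :
    degIn (A ∩ B) v = #(A ∩ {e ∈ B | v ∈ e}) := by
  rw [degIn, inter_filter]

variable {G : SimpleGraph V}

lemma IsPM.isEvenSub_symmDiff {F M : Finset (Sym2 V)} (hF : IsPM G F) (hM : IsPM G M) :
    IsEvenSub G (F ∆ M) := by
  refine ⟨fun e he => ?_, fun v => ?_⟩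
  · rcases mem_symmDiff.mp he with h | h
    exacts [hF.1 e h.1, hM.1 e h.1]
  · have h := degIn_symmDiff_add F M v
    unfold degIn at h
    rw [hF.2 v, hM.2 v] at h
    exact Nat.even_iff.mpr (by omega)

variable [Fintype V]

lemma sum_degIn {A : Finset (Sym2 V)} (hA : ∀ e ∈ A, e ∈ G.edgeSet) :
    ∑ v, degIn A v = 2 * #A := by
  simp_rw [degIn, card_filter]
  rw [sum_comm, mul_comm, ← smul_eq_mul, ← sum_const]
  refine sum_congr rfl fun e he => ?_
  rw [← card_filter]
  induction e with
  | _ a b =>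
    have hab : a ≠ b := (G.mem_edgeSet.mp (hA _ he)).ne
    have hends : ({x | x ∈ s(a, b)} : Finset V) = {a, b} := by ext; simp
    rw [hends, card_pair hab]

lemma degIn_edgeFinset (v : V) : degIn G.edgeFinset v = G.degree v := by
  rw [← card_incidenceFinset_eq_degree, incidenceFinset_eq_filter, degIn]

lemma IsPM.card_eq {M : Finset (Sym2 V)} (hM : IsPM G M) : Fintype.card V = 2 * #M := by
  rw [← sum_degIn hM.1]
  simp [degIn, hM.2]

lemma IsCubic.two_mul_card_edgeFinset (hcub : IsCubic G) :
    2 * #G.edgeFinset = 3 * Fintype.card V := by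
  rw [← sum_degrees_eq_twice_card_edges]
  simp [show ∀ v, G.degree v = 3 from hcub, mul_comm]

end Degree

section CycleCover

variable {V : Type*} [Fintype V] {G : SimpleGraph V} {k : ℕ} {D : Fin k → Finset (Sym2 V)}

lemma IsCycleCover.subset_edgeFinset (hD : IsCycleCover G k D) (i : Fin k) :
    D i ⊆ G.edgeFinset :=
  fun e he => mem_edgeFinset.mpr ((hD.1 i).1 e he)

lemma IsCycleCover.sum_card_eq_sum_coverCount (hD : IsCycleCover G k D) :
    ∑ i, #(D i) = ∑ e ∈ G.edgeFinset, coverCount D e :=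
  _root_.sum_card_eq_sum_coverCount hD.subset_edgeFinset

lemma IsCycleCover.one_le_coverCount (hD : IsCycleCover G k D) {e : Sym2 V}
    (he : e ∈ G.edgeFinset) : 1 ≤ coverCount D e := by
  obtain ⟨i, hi⟩ := hD.2 e (mem_edgeFinset.mp he)
  exact card_pos.mpr ⟨i, mem_filter.mpr ⟨mem_univ i, hi⟩⟩

/-- Shifting each colour class by `M` gives cycles that cover the edges of `M` twice and all other
edges once. -/
theorem exists_isCycleCover_of_classIPlus (hcub : IsCubic G) {M : Finset (Sym2 V)}
    (hM : IsPM G M) {t : ℕ} (hC : ClassIPlus G (fun e => if e ∈ M then t else 0) (t + 3)) :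
    ∃ (k : ℕ) (D : Fin k → Finset (Sym2 V)),
      IsCycleCover G k D ∧ 3 * ∑ i, #(D i) = 4 * #G.edgeFinset := by
  obtain ⟨F, hF, hcount⟩ := hC
  have hcov : ∀ e ∈ G.edgeSet,
      coverCount (fun i => F i ∆ M) e = 1 + if e ∈ M then 1 else 0 := by
    intro e he
    have h : coverCount F e = 1 + if e ∈ M then t else 0 := hcount e he
    rw [coverCount_symmDiff, Fintype.card_fin]
    split_ifs at h ⊢ <;> omega
  have hD : IsCycleCover G (t + 3) (fun i => F i ∆ M) :=
    ⟨fun i => (hF i).isEvenSub_symmDiff hM,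
      fun e he => exists_mem_of_coverCount_pos (by rw [hcov e he]; omega)⟩
  refine ⟨t + 3, _, hD, ?_⟩
  have hlen : ∑ i, #(F i ∆ M) = #G.edgeFinset + #M := by
    rw [hD.sum_card_eq_sum_coverCount,
      sum_congr rfl fun e he => hcov e (mem_edgeFinset.mp he), sum_add_distrib, sum_boole,
      filter_mem_eq_inter, inter_eq_right.mpr fun e he => mem_edgeFinset.mpr (hM.1 e he)]
    simp
  have := hM.card_eq
  have := hcub.two_mul_card_edgeFinset
  omega

lemma IsCycleCover.sum_degIn_eq_sum_coverCount (hD : IsCycleCover G k D) (v : V) :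
    ∑ i, degIn (D i) v = ∑ e ∈ {e ∈ G.edgeFinset | v ∈ e}, coverCount D e := by
  rw [← sum_card_inter_eq_sum_coverCount]
  refine sum_congr rfl fun i _ => ?_
  rw [← degIn_inter, inter_eq_left.mpr (hD.subset_edgeFinset i)]

lemma IsCycleCover.sum_sum_degIn (hD : IsCycleCover G k D) :
    ∑ v, ∑ i, degIn (D i) v = 2 * ∑ i, #(D i) := by
  rw [sum_comm, mul_sum]
  exact sum_congr rfl fun i _ => sum_degIn (hD.1 i).1

/-- The sum is even since each cycle has even degree, and at least `3` since every edge at `v` is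
covered. -/
lemma IsCycleCover.four_le_sum_degIn (hcub : IsCubic G) (hD : IsCycleCover G k D) (v : V) :
    4 ≤ ∑ i, degIn (D i) v := by
  have heven : Even (∑ i, degIn (D i) v) := Finset.even_sum _ fun i _ => (hD.1 i).2 v
  have hthree : 3 ≤ ∑ i, degIn (D i) v := by
    rw [hD.sum_degIn_eq_sum_coverCount]
    calc 3 = #{e ∈ G.edgeFinset | v ∈ e} • 1 := by
          rw [← degIn, degIn_edgeFinset, hcub v]; rfl
      _ ≤ _ := card_nsmul_le_sum _ _ _ fun e he => hD.one_le_coverCount (mem_filter.mp he).1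
  obtain ⟨r, hr⟩ := heven
  omega

theorem IsCycleCover.four_mul_card_edgeFinset_le (hcub : IsCubic G) (hD : IsCycleCover G k D) :
    4 * #G.edgeFinset ≤ 3 * ∑ i, #(D i) := by
  have h := sum_le_sum fun v (_ : v ∈ univ) => hD.four_le_sum_degIn hcub v
  rw [hD.sum_sum_degIn, sum_const, card_univ, smul_eq_mul] at h
  have := hcub.two_mul_card_edgeFinset
  omega

noncomputable def doublyCovered (G : SimpleGraph V) (D : Fin k → Finset (Sym2 V)) :
    Finset (Sym2 V) :=
  {e ∈ G.edgeFinset | coverCount D e = 2}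

section Tight

variable (hcub : IsCubic G) (hD : IsCycleCover G k D)
  (hlen : 3 * ∑ i, #(D i) = 4 * #G.edgeFinset)
include hcub hD hlen

lemma IsCycleCover.sum_degIn_eq_four (v : V) : ∑ i, degIn (D i) v = 4 := by
  have h : ∑ _v : V, 4 = ∑ v, ∑ i, degIn (D i) v := by
    rw [hD.sum_sum_degIn, sum_const, card_univ, smul_eq_mul]
    have := hcub.two_mul_card_edgeFinset
    omega
  exact ((sum_eq_sum_iff_of_le fun v _ => hD.four_le_sum_degIn hcub v).mp h v (mem_univ v)).symm

lemma IsCycleCover.coverCount_at_vertex (v : V) :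
    (∀ e ∈ {e ∈ G.edgeFinset | v ∈ e}, coverCount D e ≤ 2) ∧
      #{e ∈ {e ∈ G.edgeFinset | v ∈ e} | coverCount D e = 2} = 1 :=
  le_two_and_card_filter_eq_two_of_sum_eq_four
    (by rw [← degIn, degIn_edgeFinset, hcub v])
    (fun e he => hD.one_le_coverCount (mem_filter.mp he).1)
    (by rw [← hD.sum_degIn_eq_sum_coverCount]; exact hD.sum_degIn_eq_four hcub hlen v)

lemma IsCycleCover.coverCount_le_two {e : Sym2 V} (he : e ∈ G.edgeSet) :
    coverCount D e ≤ 2 := by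
  induction e with
  | _ a b =>
    exact (hD.coverCount_at_vertex hcub hlen a).1 _
      (mem_filter.mpr ⟨mem_edgeFinset.mpr he, Sym2.mem_mk_left a b⟩)

lemma IsCycleCover.isPM_doublyCovered : IsPM G (doublyCovered G D) :=
  ⟨fun e he => mem_edgeFinset.mp (mem_filter.mp he).1, fun v => by
    rw [doublyCovered, filter_comm]
    exact (hD.coverCount_at_vertex hcub hlen v).2⟩

/-- At `v` every `D j ∆ M` has odd degree, and these degrees sum to `4 + k - 2 * 2 = k` because
the `M`-edge at `v` lies in exactly two cycles; hence they are all `1`. -/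
lemma IsCycleCover.isPM_symmDiff_doublyCovered (i : Fin k) :
    IsPM G (D i ∆ doublyCovered G D) := by
  set M := doublyCovered G D
  have hM : IsPM G M := hD.isPM_doublyCovered hcub hlen
  refine ⟨fun e he => ?_, fun v => ?_⟩
  · rcases mem_symmDiff.mp he with h | h
    exacts [(hD.1 i).1 e h.1, hM.1 e h.1]
  have hMv : degIn M v = 1 := hM.2 v
  have hodd : ∀ j, Odd (degIn (D j ∆ M) v) := by
    intro j
    have h := degIn_symmDiff_add (D j) M v
    obtain ⟨r, hr⟩ : Even (degIn (D j) v) := (hD.1 j).2 v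
    exact Nat.odd_iff.mpr (by omega)
  have hinter : ∑ j, degIn (D j ∩ M) v = 2 := by
    simp_rw [degIn_inter]
    have hM2 : ∀ e ∈ {e ∈ M | v ∈ e}, coverCount D e = 2 :=
      fun e he => (mem_filter.mp (mem_filter.mp he).1).2
    rw [sum_card_inter_eq_sum_coverCount, sum_congr rfl hM2, sum_const]
    exact congrArg (· • 2) hMv
  have hsum : ∑ j, degIn (D j ∆ M) v = ∑ _j : Fin k, 1 := by
    have h := sum_congr rfl fun j (_ : j ∈ univ) => degIn_symmDiff_add (D j) M v
    rw [sum_add_distrib, ← mul_sum, sum_add_distrib, hinter, hD.sum_degIn_eq_four hcub hlen,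
      hMv] at h
    simp only [sum_const, card_univ, Fintype.card_fin, smul_eq_mul, mul_one] at h ⊢
    omega
  exact ((sum_eq_sum_iff_of_le fun j _ => (hodd j).pos).mp hsum.symm i (mem_univ i)).symm

/-- The `k` perfect matchings `D i ∆ M` and four copies of `M` colour `G + (k + 1) M`. -/
theorem IsCycleCover.classIPlus_doublyCovered :
    ClassIPlus G (fun e => if e ∈ doublyCovered G D then k + 1 else 0) (k + 1 + 3) := by
  set M := doublyCovered G D
  have hM : IsPM G M := hD.isPM_doublyCovered hcub hlen
  let F : Fin (k + 4) → Finset (Sym2 V) := Fin.append (fun i => D i ∆ M) (fun _ => M)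
  refine ⟨F, fun i => ?_, fun e he => ?_⟩
  · refine Fin.addCases (motive := fun i => IsPM G (F i)) (fun i => ?_) (fun i => ?_) i
    · simpa [F] using hD.isPM_symmDiff_doublyCovered hcub hlen i
    · simpa [F] using hM
  · have hpos := hD.one_le_coverCount (mem_edgeFinset.mpr he)
    have hle := hD.coverCount_le_two hcub hlen he
    have hk : coverCount D e ≤ k := by simpa using coverCount_le_card D e
    have hmem : e ∈ M ↔ coverCount D e = 2 := by
      simp [M, doublyCovered, mem_edgeFinset.mpr he]
    change coverCount F e = _
    rw [coverCount_append, coverCount_symmDiff, coverCount_const]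
    simp only [Fintype.card_fin]
    split_ifs with h <;> rw [hmem] at h <;> omega

end Tight

end CycleCover

section Scc

variable {V : Type*} {G : SimpleGraph V}

lemma SimpleGraph.Walk.IsCycle.isEvenSub_edgesFinset {u : V} {p : G.Walk u u}
    (hp : p.IsCycle) : IsEvenSub G hp.isTrail.edgesFinset := by
  refine ⟨fun e he => p.edges_subset_edgeSet he, fun x => ?_⟩
  have := (hp.isTrail.even_countP_edges_iff x).mpr (absurd rfl)
  rwa [← Multiset.coe_countP, Multiset.countP_eq_card_filter] at this

lemma IsBridgeless.exists_isEvenSub_mem (hbl : IsBridgeless G) {e : Sym2 V}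
    (he : e ∈ G.edgeSet) : ∃ D, IsEvenSub G D ∧ e ∈ D := by
  obtain ⟨u, p, hp, hep⟩ : ∃ u, ∃ p : G.Walk u u, p.IsCycle ∧ e ∈ p.edges := by
    simpa [isBridge_iff_forall_cycle_notMem he] using hbl e he
  exact ⟨hp.isTrail.edgesFinset, hp.isEvenSub_edgesFinset, hep⟩

lemma scc_le {k : ℕ} {D : Fin k → Finset (Sym2 V)} (hD : IsCycleCover G k D) :
    scc G ≤ ∑ i, #(D i) :=
  Nat.sInf_le ⟨k, D, hD, rfl⟩

variable [Fintype V]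

lemma IsBridgeless.exists_isCycleCover (hbl : IsBridgeless G) :
    ∃ (k : ℕ) (D : Fin k → Finset (Sym2 V)), IsCycleCover G k D := by
  choose D hD hmem using fun e : G.edgeSet => hbl.exists_isEvenSub_mem e.2
  let eqv := Fintype.equivFin G.edgeSet
  exact ⟨_, fun i => D (eqv.symm i), fun i => hD _,
    fun e he => ⟨eqv ⟨e, he⟩, by simpa using hmem ⟨e, he⟩⟩⟩

lemma IsBridgeless.exists_isCycleCover_scc_eq (hbl : IsBridgeless G) :
    ∃ (k : ℕ) (D : Fin k → Finset (Sym2 V)),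
      IsCycleCover G k D ∧ scc G = ∑ i, #(D i) := by
  obtain ⟨k, D, hD⟩ := hbl.exists_isCycleCover
  exact Nat.sInf_mem (s := {L | ∃ (k : ℕ) (D : Fin k → Finset (Sym2 V)),
    IsCycleCover G k D ∧ L = ∑ i, #(D i)}) ⟨_, k, D, hD, rfl⟩

end Scc

/-- For every bridgeless cubic graph `G`: `scc(G) > (4/3)·|E(G)|` iff `G` is frumious;
otherwise `scc(G) = (4/3)·|E(G)|`. -/
theorem stmt16 {V : Type*} [Fintype V] (G : SimpleGraph V)
    (hcub : IsCubic G) (hbl : IsBridgeless G) :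
    (4 * G.edgeFinset.card < 3 * scc G ↔ Frumious G) ∧
      (¬ Frumious G → 3 * scc G = 4 * G.edgeFinset.card) := by
  obtain ⟨k, D, hD, hscc⟩ := hbl.exists_isCycleCover_scc_eq
  have hlow : 4 * #G.edgeFinset ≤ 3 * scc G := hscc ▸ hD.four_mul_card_edgeFinset_le hcub
  have htight : ¬ Frumious G → 3 * scc G = 4 * #G.edgeFinset := by
    intro hnf
    simp only [Frumious, not_forall, not_not] at hnf
    obtain ⟨M, hM, t, -, hC⟩ := hnf
    obtain ⟨k', D', hD', hlen⟩ := exists_isCycleCover_of_classIPlus hcub hM hC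
    have := scc_le hD'
    omega
  have hloose : Frumious G → 4 * #G.edgeFinset < 3 * scc G := by
    refine fun hfr => lt_of_le_of_ne hlow fun heq => ?_
    have hlen : 3 * ∑ i, #(D i) = 4 * #G.edgeFinset := by rw [← hscc, heq]
    exact hfr _ (hD.isPM_doublyCovered hcub hlen) (k + 1) k.succ_pos
      (hD.classIPlus_doublyCovered hcub hlen)
  refine ⟨⟨fun hlt => ?_, hloose⟩, htight⟩
  by_contra hnf
  have := htight hnf
  omega
end

section
/- For any bridgeless cubic graph G and any integer t ≥ 0: there exist t 2-factors F̄_1,...,F̄_t of G such that G + F̄_1 + ... + F̄_t is Class I (i.e. (2t+3)-edge-colourable) if and only if the multigraph (t+1)G, obtained by replacing each edge of G by t+1 parallel edges, is Class I (i.e. (3t+3)-edge-colourable). -/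
open Finset
open scoped Classical

/-!
In a cubic graph the complement of a 2-factor `F̄` is a perfect matching `M`, and conversely.
Since `F̄ + M = E(G)`, adding the matchings `M_i = E(G) \ F̄_i` to `G + F̄_1 + ⋯ + F̄_t` gives
exactly `(t+1)G`. So a `(2t+3)`-colouring of the former extends, by `t` further colour classes
`M_i`, to a `(3t+3)`-colouring of `(t+1)G`; and from a `(3t+3)`-colouring of `(t+1)G`, splitting
off `t` colour classes and taking the complements of those as the 2-factors `F̄_i` leaves a
`(2t+3)`-colouring of `G + F̄_1 + ⋯ + F̄_t`.
-/

theorem Fin.card_filter_univ_add {α : Type*} [DecidableEq α] {m n : ℕ}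
    (N : Fin (m + n) → Finset α) (e : α) :
    #{i | e ∈ N i} = #{i | e ∈ N (Fin.castAdd n i)} + #{j | e ∈ N (Fin.natAdd m j)} := by
  simp only [card_filter, Fin.sum_univ_add]

theorem card_filter_mem_sdiff_add_card_filter_mem {α ι : Type*} [DecidableEq α] [Fintype ι]
    {s : Finset α} {e : α} (he : e ∈ s) (A : ι → Finset α) :
    #{i | e ∈ s \ A i} + #{i | e ∈ A i} = Fintype.card ι := by
  simp only [mem_sdiff, he, true_and]
  rw [add_comm, card_filter_add_card_filter_not, card_univ]

section Cubic

variable {V : Type*} [Fintype V] {G : SimpleGraph V}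

theorem IsCubic.card_filter_mem_edgeFinset (hcub : IsCubic G) (v : V) :
    #{e ∈ G.edgeFinset | v ∈ e} = 3 := by
  rw [← SimpleGraph.incidenceFinset_eq_filter, SimpleGraph.card_incidenceFinset_eq_degree, hcub]

theorem IsCubic.card_filter_mem_edgeFinset_sdiff (hcub : IsCubic G) {S : Finset (Sym2 V)}
    (hS : ∀ e ∈ S, e ∈ G.edgeSet) (v : V) :
    #{e ∈ G.edgeFinset \ S | v ∈ e} = 3 - #{e ∈ S | v ∈ e} := by
  have hsub : S ⊆ G.edgeFinset := fun e he => SimpleGraph.mem_edgeFinset.2 (hS e he)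
  have hfilter :
      {e ∈ G.edgeFinset \ S | v ∈ e} = {e ∈ G.edgeFinset | v ∈ e} \ {e ∈ S | v ∈ e} := by
    grind
  rw [hfilter, card_sdiff_of_subset (filter_subset_filter _ hsub),
    hcub.card_filter_mem_edgeFinset]

theorem IsPM.isTwoFactor_sdiff (hcub : IsCubic G) {M : Finset (Sym2 V)} (hM : IsPM G M) :
    IsTwoFactor G (G.edgeFinset \ M) :=
  ⟨fun _ he => SimpleGraph.mem_edgeFinset.1 (mem_sdiff.1 he).1,
    fun v => by rw [hcub.card_filter_mem_edgeFinset_sdiff hM.1, hM.2 v]⟩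

theorem IsTwoFactor.isPM_sdiff (hcub : IsCubic G) {C : Finset (Sym2 V)}
    (hC : IsTwoFactor G C) : IsPM G (G.edgeFinset \ C) :=
  ⟨fun _ he => SimpleGraph.mem_edgeFinset.1 (mem_sdiff.1 he).1,
    fun v => by rw [hcub.card_filter_mem_edgeFinset_sdiff hC.1, hC.2 v]⟩

end Cubic

theorem stmt19_general {V : Type*} [Fintype V] (G : SimpleGraph V)
    (hcub : IsCubic G) (t : ℕ) :
    (∃ F : Fin t → Finset (Sym2 V), (∀ i, IsTwoFactor G (F i)) ∧
        ClassIPlus G (fun e => (Finset.univ.filter (fun i => e ∈ F i)).card) (2 * t + 3))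
      ↔ ClassIPlus G (fun _ => t) (3 * t + 3) := by
  rw [show 3 * t + 3 = 2 * t + 3 + t by ring]
  constructor
  · rintro ⟨F, hF, N, hN, hcount⟩
    refine ⟨Fin.append N fun i => G.edgeFinset \ F i,
      Fin.addCases (by simpa using hN) (by simpa using fun i => (hF i).isPM_sdiff hcub),
      fun e he => ?_⟩
    have hcompl := card_filter_mem_sdiff_add_card_filter_mem (SimpleGraph.mem_edgeFinset.2 he) F
    rw [Fin.card_filter_univ_add]
    simp only [Fin.append_left, Fin.append_right, hcount e he, Fintype.card_fin] at hcompl ⊢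
    omega
  · rintro ⟨N, hN, hcount⟩
    refine ⟨fun j => G.edgeFinset \ N (Fin.natAdd _ j), fun j => (hN _).isTwoFactor_sdiff hcub,
      fun i => N (Fin.castAdd t i), fun i => hN _, fun e he => ?_⟩
    have hcompl := card_filter_mem_sdiff_add_card_filter_mem (SimpleGraph.mem_edgeFinset.2 he)
      fun j => N (Fin.natAdd (2 * t + 3) j)
    have hsplit := hcount e he
    rw [Fin.card_filter_univ_add] at hsplit
    dsimp only at hsplit
    simp only [Fintype.card_fin] at hcompl ⊢
    omega

/-- For a bridgeless cubic graph `G` and `t ≥ 0`: there are `t` 2-factors of `G` whose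
addition to `G` gives a Class I (`(2t+3)`-edge-colourable) multigraph iff the multigraph
`(t+1)G`, with every edge of `G` taken with multiplicity `t+1`, is Class I
(`(3t+3)`-edge-colourable). -/
theorem stmt19 {V : Type*} [Fintype V] (G : SimpleGraph V)
    (hcub : IsCubic G) (hbl : IsBridgeless G) (t : ℕ) :
    (∃ F : Fin t → Finset (Sym2 V), (∀ i, IsTwoFactor G (F i)) ∧
        ClassIPlus G (fun e => (Finset.univ.filter (fun i => e ∈ F i)).card) (2 * t + 3))
      ↔ ClassIPlus G (fun _ => t) (3 * t + 3) :=
  stmt19_general G hcub t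
end
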